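/- Let G be a group generated by a finite symmetric set with word length ℓ, and let H ≤ G be a subgroup. The following are equivalent: (1) there exist constants K, s ≥ 0 such that ‖f‖_h ≤ K·‖f·(1+ℓ)^s‖_{(2,1)} for every finitely supported f : G → ℂ; (2) there exist constants C, D ≥ 0 such that ‖f*ϕ‖_{(2,1)} ≤ C(R+1)^D·‖f‖_{(2,1)}·‖ϕ‖_{(2,1)} for every R ≥ 0, every finitely supported f : G → ℂ supported in B(R), and every finitely supported ϕ : G → ℂ; (3) there exist constants C, D ≥ 0 such that ‖f‖_h ≤ C(R+1)^D·‖f‖_{(2,1)} for every R ≥ 0 and every finitely supportedف f : G → ℂ supported in B(R); (4) there exist constants C, D ≥ 0 such that for every R ≥ 0, every finitely supported nonnegative f : G → ℝ supported in B(R), and all finitely supported nonnegative ϕ, ψ : G → ℝ, one has ∑_{h∈H} ((f*ϕ)^⋆ * ψ^⋆)(h) ≤ C(R+1)^D·‖f‖_{(2,1)}·‖ϕ‖_{(2,1)}·‖ψ^⋆‖_{(2,1)}, where g^⋆(x) := g(x⁻¹). -/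

import Mathlib

open scoped BigOperators

attribute [local instance] Classical.propDecidable

section Defs

variable {G : Type*} [Group G]

/-- Word length with respect to a generating set `S`. -/
noncomputable def wordLength (S : Set G) (x : G) : ℕ :=
  sInf {n | ∃ l : List G, (∀ s ∈ l, s ∈ S) ∧ l.length = n ∧ l.prod = x}

/-- Convolution of finitely supported functions:
`(f * ϕ) x = ∑ z, f z * ϕ (z⁻¹ * x)`. -/
noncomputable def conv {k : Type*} [Semiring k] (f ϕ : G →₀ k) : G →₀ k :=
  f.sum fun z c => c • Finsupp.mapDomain (fun x => z * x) ϕ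

/-- `n`-fold convolution power. -/
noncomputable def convPow {k : Type*} [Semiring k] (f : G →₀ k) : ℕ → G →₀ k
  | 0 => Finsupp.single 1 1
  | n + 1 => conv f (convPow f n)

/-- ℓ² norm of a finitely supported function. -/
noncomputable def l2Norm {α k : Type*} [NormedAddCommGroup k] (f : α →₀ k) : ℝ :=
  Real.sqrt (∑ x ∈ f.support, ‖f x‖ ^ 2)

/-- ℓ¹ norm of a finitely supported function. -/
noncomputable def l1Norm {α k : Type*} [NormedAddCommGroup k] (f : α →₀ k) : ℝ :=
  ∑ x ∈ f.support, ‖f x‖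

/-- The hybrid `(2,1)` norm with respect to the subgroup `H`:
`‖f‖_{(2,1)} = sqrt (∑_{gH ∈ G/H} (∑_{x ∈ gH} |f x|)²)`. -/
noncomputable def l21Norm (H : Subgroup G) {k : Type*} [NormedAddCommGroup k]
    (f : G →₀ k) : ℝ :=
  l2Norm (Finsupp.mapDomain (QuotientGroup.mk : G → G ⧸ H) (f.mapRange norm norm_zero))

/-- Hybrid operator norm `‖f‖_h`. -/
noncomputable def hybridOpNorm (H : Subgroup G) (f : G →₀ ℂ) : ℝ :=
  sSup {c : ℝ | ∃ ϕ : G →₀ ℂ, l21Norm H ϕ ≤ 1 ∧ c = l21Norm H (conv f ϕ)}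

/-- Regular operator norm `‖f‖_*`. -/
noncomputable def regOpNorm (f : G →₀ ℂ) : ℝ :=
  sSup {c : ℝ | ∃ ξ : G →₀ ℂ, l2Norm ξ ≤ 1 ∧ c = l2Norm (conv f ξ)}

/-- The quasi-regular representation:
`(λ_{G/H}(f) ξ)(gH) = ∑ z, f z * ξ (z⁻¹ g H)`. -/
noncomputable def quasiReg (H : Subgroup G) (f : G →₀ ℂ) (ξ : (G ⧸ H) →₀ ℂ) :
    (G ⧸ H) →₀ ℂ :=
  f.sum fun z c => c • Finsupp.mapDomain (fun q => z • q) ξ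

/-- Quasi-regular operator norm `‖λ_{G/H}(f)‖`. -/
noncomputable def quasiRegOpNorm (H : Subgroup G) (f : G →₀ ℂ) : ℝ :=
  sSup {c : ℝ | ∃ ξ : (G ⧸ H) →₀ ℂ, l2Norm ξ ≤ 1 ∧ c = l2Norm (quasiReg H f ξ)}

/-- Embed a real finitely supported function into the complex valued ones. -/
noncomputable def toC {α : Type*} (f : α →₀ ℝ) : α →₀ ℂ :=
  f.mapRange Complex.ofReal Complex.ofReal_zero

/-- Pointwise weight of a function by `(1 + ℓ)^s`. -/
noncomputable def weight (S : Set G) (s : ℝ) (f : G →₀ ℂ) : G →₀ ℂ where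
  support := f.support
  toFun x := ((((1 : ℝ) + (wordLength S x : ℝ)) ^ s : ℝ) : ℂ) * f x
  mem_support_toFun x := by
    simp only [Finsupp.mem_support_iff]
    have hpos : (0 : ℝ) < ((1 : ℝ) + (wordLength S x : ℝ)) ^ s :=
      Real.rpow_pos_of_pos (by positivity) s
    constructor
    · intro hf h
      rcases mul_eq_zero.mp h with h1 | h2
      · exact hpos.ne' (by exact_mod_cast h1)
      · exact hf h2
    · intro h hf
      exact h (by rw [hf, mul_zero])

/-- The involution `f⋆ x = f x⁻¹`. -/
noncomputable def starFun {k : Type*} [Zero k] (f : G →₀ k) : G →₀ k :=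
  Finsupp.equivMapDomain (Equiv.inv G) f

/-- Sum of the values of `g` over the subgroup `H`. -/
noncomputable def sumOverSubgroup (H : Subgroup G) (g : G →₀ ℝ) : ℝ :=
  ∑ x ∈ g.support.filter (fun x => x ∈ H), g x

/-- `f` is supported in the ball of radius `R` for the word length of `S`. -/
def supportedInBall (S : Set G) (R : ℕ) {k : Type*} [Zero k] (f : G →₀ k) : Prop :=
  ∀ x ∈ f.support, wordLength S x ≤ R

/-- Rapid decay property for the pair `(G, H)`. -/
def PairRD (S : Set G) (H : Subgroup G) : Prop :=
  ∃ C : ℝ, ∃ D : ℕ, 0 ≤ C ∧ ∀ (R : ℕ) (f ϕ : G →₀ ℂ), supportedInBall S R f →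
    l21Norm H (conv f ϕ) ≤ C * ((R : ℝ) + 1) ^ D * l21Norm H f * l21Norm H ϕ

/-- Rapid decay property for the group `G`. -/
def GroupRD (S : Set G) : Prop :=
  ∃ C : ℝ, ∃ D : ℕ, 0 ≤ C ∧ ∀ (R : ℕ) (f ϕ : G →₀ ℂ), supportedInBall S R f →
    l2Norm (conv f ϕ) ≤ C * ((R : ℝ) + 1) ^ D * l2Norm f * l2Norm ϕ

/-- Polynomial growth of a subgroup for the induced length. -/
def polyGrowthSubgroup (S : Set G) (H : Subgroup G) : Prop :=
  ∃ C : ℝ, ∃ D : ℕ, 0 ≤ C ∧ ∀ R : ℕ,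
    (Set.ncard {x : G | x ∈ H ∧ wordLength S x ≤ R} : ℝ) ≤ C * ((R : ℝ) + 1) ^ D

/-- Polynomial growth of the coset space `G/H`. -/
def polyGrowthQuotient (S : Set G) (H : Subgroup G) : Prop :=
  ∃ C : ℝ, ∃ D : ℕ, 0 ≤ C ∧ ∀ R : ℕ,
    (Set.ncard ((QuotientGroup.mk : G → G ⧸ H) '' {x : G | wordLength S x ≤ R}) : ℝ) ≤
      C * ((R : ℝ) + 1) ^ D

/-- Co-amenability of `H` in `G`: Følner condition for the left action on `G/H`. -/
def Coamenable (H : Subgroup G) : Prop :=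
  ∀ ε : ℝ, 0 < ε → ∀ F : Finset G, ∃ V : Finset (G ⧸ H), V.Nonempty ∧
    ((symmDiff (Finset.image₂ (· • ·) F V) V).card : ℝ) ≤ ε * (V.card : ℝ)

/-- Matrix coefficient `⟨λ_{G/H}(γ) ξ, η⟩` of the quasi-regular representation
on `ℓ²(G/H)`. -/
noncomputable def qrCoeff (H : Subgroup G) (γ : G)
    (ξ η : lp (fun _ : G ⧸ H => ℂ) 2) : ℂ :=
  ∑' q : G ⧸ H, ξ (γ⁻¹ • q) * (starRingEnd ℂ) (η q)

/-- The spectral radius of the random walk induced on `G/H`: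
`ρ = limsup P_{2n}(H,H)^{1/(2n)}`. -/
noncomputable def specRadQuot (H : Subgroup G) (μ : G →₀ ℝ) : ℝ :=
  Filter.limsup (fun n : ℕ =>
    (sumOverSubgroup H (convPow μ (2 * n))) ^ ((1 : ℝ) / (2 * (n : ℝ)))) Filter.atTop

end Defs


/-! The conditions are linked through the coset sums `gH ↦ ∑_{x ∈ gH} |f x|`, whose `ℓ²(G/H)`
norm is `‖f‖_{(2,1)}`; `(2) ⇔ (3)` is the definition of `‖·‖_h`.

`(1) ⇒ (3)`: on `B(R)` the weight `(1+ℓ)^s` is at most `(R+1)^⌈s⌉`. `(3) ⇒ (1)`: split `f` into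
its pieces `fₙ` on the spheres of radius `n`. Then `‖f‖_h ≤ ∑ C (n+1)^D ‖fₙ‖_{(2,1)}`, and
Cauchy–Schwarz against `∑ (n+1)⁻² ≤ 2` bounds this by `C √2 (∑ (n+1)^{2D+2} ‖fₙ‖²_{(2,1)})^{1/2}`;
as the coset sums of the `fₙ` are nonnegative and add up to that of `f`, the last sum is at most
`‖f (1+ℓ)^{D+1}‖²_{(2,1)}`.

`(2) ⇔ (4)`: for nonnegative `g`, `u` the sum of `g⋆ * u` over `H` is the `ℓ²(G/H)` pairing of
the coset sums of `g` and `u`. So `(4)` follows from `(2)` by Cauchy–Schwarz, and conversely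
`ψ = (|f| * |ϕ|)⋆` in `(4)` gives `(2)` for `|f|`, `|ϕ|`, whose convolution dominates `|f * ϕ|`.
-/

section L2Norm

open Finsupp

variable {α k : Type*} [NormedAddCommGroup k]

lemma l2Norm_nonneg (f : α →₀ k) : 0 ≤ l2Norm f :=
  Real.sqrt_nonneg _

lemma l2Norm_eq_sqrt_sum {f : α →₀ k} {s : Finset α} (hs : f.support ⊆ s) :
    l2Norm f = √(∑ x ∈ s, ‖f x‖ ^ 2) := by
  unfold l2Norm
  congr 1
  exact Finset.sum_subset hs fun x _ hx => by simp [notMem_support_iff.mp hx]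

lemma l2Norm_sq {f : α →₀ k} {s : Finset α} (hs : f.support ⊆ s) :
    l2Norm f ^ 2 = ∑ x ∈ s, ‖f x‖ ^ 2 := by
  rw [l2Norm_eq_sqrt_sum hs, Real.sq_sqrt (by positivity)]

lemma l2Norm_eq_norm_toLp {f : α →₀ k} {s : Finset α} (hs : f.support ⊆ s) :
    l2Norm f = ‖WithLp.toLp 2 fun x : s => f x‖ := by
  rw [l2Norm_eq_sqrt_sum hs, PiLp.norm_eq_of_L2, ← Finset.sum_coe_sort s]

lemma l2Norm_mono {k' : Type*} [NormedAddCommGroup k'] {f : α →₀ k} {g : α →₀ k'}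
    (h : ∀ x, ‖f x‖ ≤ ‖g x‖) : l2Norm f ≤ l2Norm g := by
  rw [l2Norm_eq_sqrt_sum (Finset.subset_union_left (s₂ := g.support)),
    l2Norm_eq_sqrt_sum Finset.subset_union_right]
  gcongr with x
  exact h x

lemma l2Norm_mono_of_nonneg {v w : α →₀ ℝ} (hv : 0 ≤ v) (hvw : v ≤ w) :
    l2Norm v ≤ l2Norm w :=
  l2Norm_mono fun x => by
    rw [Real.norm_of_nonneg (hv x), Real.norm_of_nonneg ((hv x).trans (hvw x))]
    exact hvw x

lemma l2Norm_add_le (f g : α →₀ k) : l2Norm (f + g) ≤ l2Norm f + l2Norm g := by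
  rw [l2Norm_eq_norm_toLp support_add, l2Norm_eq_norm_toLp Finset.subset_union_left,
    l2Norm_eq_norm_toLp Finset.subset_union_right]
  exact norm_add_le (WithLp.toLp 2 fun x : ↥(f.support ∪ g.support) => f x)
    (WithLp.toLp 2 fun x => g x)

lemma l2Norm_smul {𝕜 : Type*} [NormedField 𝕜] [NormedSpace 𝕜 k] (c : 𝕜) (f : α →₀ k) :
    l2Norm (c • f) = ‖c‖ * l2Norm f := by
  rw [l2Norm_eq_norm_toLp support_smul, l2Norm_eq_norm_toLp subset_rfl, ← norm_smul,
    ← WithLp.toLp_smul]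
  rfl

lemma norm_apply_le_l2Norm (f : α →₀ k) (x : α) : ‖f x‖ ≤ l2Norm f := by
  by_cases hx : x ∈ f.support
  · rw [l2Norm_eq_norm_toLp subset_rfl]
    exact PiLp.norm_apply_le (WithLp.toLp 2 fun y : f.support => f y) ⟨x, hx⟩
  · simpa [notMem_support_iff.mp hx] using l2Norm_nonneg f

lemma sum_mul_le_l2Norm_mul_l2Norm (v w : α →₀ ℝ) :
    (v.sum fun q c => c * w q) ≤ l2Norm v * l2Norm w := by
  rw [sum_of_support_subset v (Finset.subset_union_left (s₂ := w.support)) (fun q c => c * w q)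
      fun _ _ => zero_mul _,
    l2Norm_eq_sqrt_sum Finset.subset_union_left, l2Norm_eq_sqrt_sum Finset.subset_union_right]
  simpa only [Real.norm_eq_abs, sq_abs] using Real.sum_mul_le_sqrt_mul_sqrt _ _ _

lemma sum_mul_self_eq_l2Norm_sq (v : α →₀ ℝ) : (v.sum fun q c => c * v q) = l2Norm v ^ 2 := by
  simp only [l2Norm_sq subset_rfl, Real.norm_eq_abs, sq_abs, Finsupp.sum, ← sq]

lemma sum_l2Norm_sq_le_l2Norm_sum_sq {ι : Type*} (s : Finset ι) (v : ι → α →₀ ℝ)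
    (hv : ∀ i ∈ s, 0 ≤ v i) : ∑ i ∈ s, l2Norm (v i) ^ 2 ≤ l2Norm (∑ i ∈ s, v i) ^ 2 := by
  classical
  set T := s.biUnion fun i => (v i).support
  have hT : ∀ i ∈ s, (v i).support ⊆ T := fun i hi =>
    Finset.subset_biUnion_of_mem (fun i => (v i).support) hi
  rw [l2Norm_sq support_finsetSum, Finset.sum_congr rfl fun i hi => l2Norm_sq (hT i hi),
    Finset.sum_comm]
  refine Finset.sum_le_sum fun q _ => ?_
  simp only [Real.norm_eq_abs, sq_abs, finsetSum_apply]
  exact Finset.sum_sq_le_sq_sum_of_nonneg fun i hi => hv i hi q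

lemma l2Norm_equivMapDomain {β : Type*} (e : α ≃ β) (v : α →₀ k) :
    l2Norm (equivMapDomain e v) = l2Norm v := by
  unfold l2Norm
  congr 1
  exact Finset.sum_equiv e.symm (by simp) (by simp)

noncomputable def normFun (f : α →₀ k) : α →₀ ℝ :=
  f.mapRange norm norm_zero

lemma normFun_nonneg (f : α →₀ k) : 0 ≤ normFun f :=
  fun x => norm_nonneg (f x)

end L2Norm

section CosetSum

open Finsupp

variable {G : Type*} [Group G] (H : Subgroup G) {k : Type*} [NormedAddCommGroup k]

noncomputable def cosetSum (f : G →₀ k) : G ⧸ H →₀ ℝ :=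
  (f.mapRange norm norm_zero).mapDomain QuotientGroup.mk

lemma l21Norm_eq_l2Norm_cosetSum (f : G →₀ k) : l21Norm H f = l2Norm (cosetSum H f) := rfl

lemma cosetSum_nonneg (f : G →₀ k) : 0 ≤ cosetSum H f :=
  mapDomain_nonneg fun x => by simp

lemma cosetSum_mono {k' : Type*} [NormedAddCommGroup k'] {f : G →₀ k} {g : G →₀ k'}
    (h : ∀ x, ‖f x‖ ≤ ‖g x‖) : cosetSum H f ≤ cosetSum H g :=
  mapDomain_mono fun x => by simpa using h x

lemma cosetSum_add_le (f g : G →₀ k) : cosetSum H (f + g) ≤ cosetSum H f + cosetSum H g := by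
  rw [cosetSum, cosetSum, cosetSum, ← mapDomain_add]
  exact mapDomain_mono fun x => by simpa using norm_add_le (f x) (g x)

lemma cosetSum_smul {𝕜 : Type*} [NormedField 𝕜] [NormedSpace 𝕜 k] (c : 𝕜) (f : G →₀ k) :
    cosetSum H (c • f) = ‖c‖ • cosetSum H f := by
  rw [cosetSum, cosetSum, ← mapDomain_smul]
  congr 1
  ext x
  simp [norm_smul]

lemma cosetSum_of_nonneg {u : G →₀ ℝ} (hu : 0 ≤ u) :
    cosetSum H u = u.mapDomain QuotientGroup.mk := by
  rw [cosetSum]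
  congr 1
  ext x
  simp [abs_of_nonneg (hu x)]

lemma norm_apply_le_cosetSum (f : G →₀ k) (x : G) : ‖f x‖ ≤ cosetSum H f x := by
  have h : single x ‖f x‖ ≤ f.mapRange norm norm_zero := fun y => by
    rcases eq_or_ne x y with rfl | hxy <;> simp [*]
  simpa [cosetSum] using mapDomain_mono (f := (QuotientGroup.mk : G → G ⧸ H)) h x

lemma l21Norm_nonneg (f : G →₀ k) : 0 ≤ l21Norm H f :=
  l2Norm_nonneg _

lemma l21Norm_mono {k' : Type*} [NormedAddCommGroup k'] {f : G →₀ k} {g : G →₀ k'}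
    (h : ∀ x, ‖f x‖ ≤ ‖g x‖) : l21Norm H f ≤ l21Norm H g :=
  l2Norm_mono_of_nonneg (cosetSum_nonneg H f) (cosetSum_mono H h)

lemma l21Norm_add_le (f g : G →₀ k) : l21Norm H (f + g) ≤ l21Norm H f + l21Norm H g :=
  (l2Norm_mono_of_nonneg (cosetSum_nonneg H _) (cosetSum_add_le H f g)).trans
    (l2Norm_add_le _ _)

lemma l21Norm_zero : l21Norm H (0 : G →₀ k) = 0 := by
  simp [l21Norm, l2Norm]

lemma l21Norm_sum_le {ι : Type*} (s : Finset ι) (f : ι → G →₀ k) :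
    l21Norm H (∑ i ∈ s, f i) ≤ ∑ i ∈ s, l21Norm H (f i) :=
  Finset.le_sum_of_subadditive (fun g : G →₀ k => l21Norm H g) (l21Norm_zero H).le
    (l21Norm_add_le H) s f

lemma l21Norm_smul {𝕜 : Type*} [NormedField 𝕜] [NormedSpace 𝕜 k] (c : 𝕜) (f : G →₀ k) :
    l21Norm H (c • f) = ‖c‖ * l21Norm H f := by
  rw [l21Norm_eq_l2Norm_cosetSum, cosetSum_smul, l2Norm_smul, Real.norm_of_nonneg (norm_nonneg c)]
  rfl

lemma norm_apply_le_l21Norm (f : G →₀ k) (x : G) : ‖f x‖ ≤ l21Norm H f :=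
  calc ‖f x‖ ≤ cosetSum H f x := norm_apply_le_cosetSum H f x
    _ ≤ ‖cosetSum H f x‖ := Real.le_norm_self _
    _ ≤ l21Norm H f := norm_apply_le_l2Norm _ _

lemma eq_zero_of_l21Norm_eq_zero {f : G →₀ k} (hf : l21Norm H f = 0) : f = 0 :=
  ext fun x => norm_le_zero_iff.mp (hf ▸ norm_apply_le_l21Norm H f x)

lemma mapDomain_mk_mapDomain_mul_left {M : Type*} [AddCommMonoid M] (z : G) (v : G →₀ M) :
    (v.mapDomain (z * ·)).mapDomain (QuotientGroup.mk : G → G ⧸ H) =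
      (v.mapDomain QuotientGroup.mk).mapDomain (z • ·) := by
  rw [← mapDomain_comp, ← mapDomain_comp]
  rfl

lemma mapDomain_smul_left_apply {α M : Type*} [MulAction G α] [AddCommMonoid M] (z : G)
    (v : α →₀ M) (x : α) : v.mapDomain (z • ·) x = v (z⁻¹ • x) := by
  rw [show (z • ·) = ⇑(MulAction.toPerm (α := G) (β := α) z) from rfl, mapDomain_equiv_apply]
  rfl

lemma mapDomain_mul_left_apply {M : Type*} [AddCommMonoid M] (z : G) (v : G →₀ M) (x : G) :
    v.mapDomain (z * ·) x = v (z⁻¹ * x) :=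
  mapDomain_smul_left_apply z v x

lemma l21Norm_mapDomain_mul_left (z : G) (f : G →₀ k) :
    l21Norm H (f.mapDomain (z * ·)) = l21Norm H f := by
  have hnorm : (f.mapDomain (z * ·)).mapRange norm norm_zero =
      (f.mapRange norm norm_zero).mapDomain (z * ·) := by
    ext x
    simp [mapDomain_mul_left_apply]
  rw [l21Norm_eq_l2Norm_cosetSum, l21Norm_eq_l2Norm_cosetSum, cosetSum, hnorm,
    mapDomain_mk_mapDomain_mul_left, ← cosetSum]
  exact (congrArg l2Norm (equivMapDomain_eq_mapDomain _ _)).symm.trans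
    (l2Norm_equivMapDomain (MulAction.toPerm (β := G ⧸ H) z) (cosetSum H f))

end CosetSum

section Convolution

open Finsupp

variable {G : Type*} [Group G]

lemma conv_apply {k : Type*} [Semiring k] (f ϕ : G →₀ k) (x : G) :
    conv f ϕ x = f.sum fun z c => c * ϕ (z⁻¹ * x) := by
  simp [conv, Finsupp.sum_apply, mapDomain_mul_left_apply]

lemma conv_zero_left {k : Type*} [Semiring k] (ϕ : G →₀ k) : conv 0 ϕ = 0 :=
  sum_zero_index

lemma conv_zero_right {k : Type*} [Semiring k] (f : G →₀ k) : conv f 0 = 0 := by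
  simp [conv]

lemma conv_add_left {k : Type*} [Semiring k] (f g ϕ : G →₀ k) :
    conv (f + g) ϕ = conv f ϕ + conv g ϕ :=
  sum_add_index' (fun _ => zero_smul _ _) fun _ _ _ => add_smul _ _ _

lemma conv_smul_right {k : Type*} [CommSemiring k] (c : k) (f ϕ : G →₀ k) :
    conv f (c • ϕ) = c • conv f ϕ := by
  simp only [conv, mapDomain_smul, smul_sum, smul_comm c]

lemma conv_nonneg {f ϕ : G →₀ ℝ} (hf : 0 ≤ f) (hϕ : 0 ≤ ϕ) : 0 ≤ conv f ϕ := fun x => by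
  rw [conv_apply]
  exact sum_nonneg' fun z => mul_nonneg (hf z) (hϕ _)

lemma l21Norm_conv_le {k : Type*} [NormedField k] (H : Subgroup G) (f ϕ : G →₀ k) :
    l21Norm H (conv f ϕ) ≤ l1Norm f * l21Norm H ϕ := by
  refine (l21Norm_sum_le H f.support _).trans ?_
  rw [l1Norm, Finset.sum_mul]
  gcongr with z
  rw [l21Norm_smul, l21Norm_mapDomain_mul_left]

lemma norm_conv_apply_le {k : Type*} [NormedRing k] (f ϕ : G →₀ k) (x : G) :
    ‖conv f ϕ x‖ ≤ conv (normFun f) (normFun ϕ) x := by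
  rw [conv_apply, conv_apply, normFun, sum_mapRange_index fun _ => zero_mul _]
  refine (norm_sum_le _ _).trans (Finset.sum_le_sum fun z _ => ?_)
  simpa [normFun] using norm_mul_le (f z) (ϕ (z⁻¹ * x))

end Convolution

section HybridOpNorm

variable {G : Type*} [Group G] (H : Subgroup G)

lemma bddAbove_hybridOpNorm_set (f : G →₀ ℂ) :
    BddAbove {c : ℝ | ∃ ϕ : G →₀ ℂ, l21Norm H ϕ ≤ 1 ∧ c = l21Norm H (conv f ϕ)} := by
  refine ⟨l1Norm f, ?_⟩
  rintro _ ⟨ϕ, hϕ, rfl⟩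
  calc l21Norm H (conv f ϕ) ≤ l1Norm f * l21Norm H ϕ := l21Norm_conv_le H f ϕ
    _ ≤ l1Norm f := mul_le_of_le_one_right (Finset.sum_nonneg fun _ _ => norm_nonneg _) hϕ

lemma hybridOpNorm_nonneg (f : G →₀ ℂ) : 0 ≤ hybridOpNorm H f :=
  le_csSup (bddAbove_hybridOpNorm_set H f)
    ⟨0, by simp [l21Norm_zero], by rw [conv_zero_right, l21Norm_zero]⟩

lemma hybridOpNorm_le {f : G →₀ ℂ} {a : ℝ} (ha : 0 ≤ a)
    (h : ∀ ϕ : G →₀ ℂ, l21Norm H ϕ ≤ 1 → l21Norm H (conv f ϕ) ≤ a) :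
    hybridOpNorm H f ≤ a :=
  Real.sSup_le (by rintro _ ⟨ϕ, hϕ, rfl⟩; exact h ϕ hϕ) ha

lemma l21Norm_conv_le_hybridOpNorm (f ϕ : G →₀ ℂ) :
    l21Norm H (conv f ϕ) ≤ hybridOpNorm H f * l21Norm H ϕ := by
  rcases (l21Norm_nonneg H ϕ).eq_or_lt with hϕ | hϕ
  · rw [eq_zero_of_l21Norm_eq_zero H hϕ.symm, conv_zero_right, l21Norm_zero, mul_zero]
  set t := l21Norm H ϕ
  have hnormalized : t⁻¹ * l21Norm H (conv f ϕ) ≤ hybridOpNorm H f := by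
    refine le_csSup (bddAbove_hybridOpNorm_set H f) ⟨(t⁻¹ : ℂ) • ϕ, ?_, ?_⟩
    · rw [l21Norm_smul, norm_inv, Complex.norm_real, Real.norm_of_nonneg hϕ.le,
        inv_mul_cancel₀ hϕ.ne']
    · rw [conv_smul_right, l21Norm_smul, norm_inv, Complex.norm_real,
        Real.norm_of_nonneg hϕ.le]
  rwa [inv_mul_le_iff₀ hϕ, mul_comm] at hnormalized

lemma hybridOpNorm_add_le (f g : G →₀ ℂ) :
    hybridOpNorm H (f + g) ≤ hybridOpNorm H f + hybridOpNorm H g := by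
  refine hybridOpNorm_le H (add_nonneg (hybridOpNorm_nonneg H f) (hybridOpNorm_nonneg H g))
    fun ϕ hϕ => ?_
  rw [conv_add_left]
  calc l21Norm H (conv f ϕ + conv g ϕ)
      ≤ hybridOpNorm H f * l21Norm H ϕ + hybridOpNorm H g * l21Norm H ϕ :=
        (l21Norm_add_le H _ _).trans (add_le_add (l21Norm_conv_le_hybridOpNorm H f ϕ)
          (l21Norm_conv_le_hybridOpNorm H g ϕ))
    _ ≤ hybridOpNorm H f + hybridOpNorm H g := by
        rw [← add_mul]
        exact mul_le_of_le_one_right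
          (add_nonneg (hybridOpNorm_nonneg H f) (hybridOpNorm_nonneg H g)) hϕ

lemma hybridOpNorm_zero : hybridOpNorm H (0 : G →₀ ℂ) = 0 :=
  (hybridOpNorm_le H le_rfl fun ϕ _ => by rw [conv_zero_left, l21Norm_zero]).antisymm
    (hybridOpNorm_nonneg H 0)

lemma hybridOpNorm_sum_le {ι : Type*} (s : Finset ι) (f : ι → G →₀ ℂ) :
    hybridOpNorm H (∑ i ∈ s, f i) ≤ ∑ i ∈ s, hybridOpNorm H (f i) :=
  Finset.le_sum_of_subadditive (fun g : G →₀ ℂ => hybridOpNorm H g) (hybridOpNorm_zero H).le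
    (hybridOpNorm_add_le H) s f

end HybridOpNorm

section Duality

open Finsupp

variable {G : Type*} [Group G] (H : Subgroup G)

lemma starFun_starFun {k : Type*} [Zero k] (f : G →₀ k) : starFun (starFun f) = f := by
  ext x
  simp [starFun]

lemma starFun_nonneg {ψ : G →₀ ℝ} (hψ : 0 ≤ ψ) : 0 ≤ starFun ψ :=
  fun x => hψ x⁻¹

lemma sumOverSubgroup_eq_mapDomain_apply (v : G →₀ ℝ) :
    sumOverSubgroup H v = v.mapDomain (QuotientGroup.mk : G → G ⧸ H) ((1 : G) : G ⧸ H) := by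
  rw [sumOverSubgroup, Finset.sum_filter, mapDomain, Finsupp.sum_apply, Finsupp.sum]
  refine Finset.sum_congr rfl fun x _ => ?_
  simp [single_apply, QuotientGroup.eq]

lemma conv_starFun {k : Type*} [Semiring k] (g u : G →₀ k) :
    conv (starFun g) u = g.sum fun w c => c • u.mapDomain (w⁻¹ * ·) := by
  rw [conv, starFun, equivMapDomain_eq_mapDomain]
  exact sum_mapDomain_index (fun _ => zero_smul _ _) fun _ _ _ => add_smul _ _ _

lemma sumOverSubgroup_conv_starFun (g u : G →₀ ℝ) :
    sumOverSubgroup H (conv (starFun g) u) =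
      (g.mapDomain QuotientGroup.mk).sum fun q c =>
        c * u.mapDomain (QuotientGroup.mk : G → G ⧸ H) q := by
  rw [sumOverSubgroup_eq_mapDomain_apply, conv_starFun, mapDomain_sum, Finsupp.sum_apply,
    sum_mapDomain_index (fun _ => zero_mul _) fun _ _ _ => add_mul _ _ _]
  refine Finsupp.sum_congr fun w _ => ?_
  rw [mapDomain_smul, Finsupp.smul_apply, mapDomain_mk_mapDomain_mul_left,
    mapDomain_smul_left_apply]
  simp

lemma sumOverSubgroup_conv_starFun_le {g u : G →₀ ℝ} (hg : 0 ≤ g) (hu : 0 ≤ u) :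
    sumOverSubgroup H (conv (starFun g) u) ≤ l21Norm H g * l21Norm H u := by
  rw [sumOverSubgroup_conv_starFun, l21Norm_eq_l2Norm_cosetSum, l21Norm_eq_l2Norm_cosetSum,
    cosetSum_of_nonneg H hg, cosetSum_of_nonneg H hu]
  exact sum_mul_le_l2Norm_mul_l2Norm _ _

lemma sumOverSubgroup_conv_starFun_self {g : G →₀ ℝ} (hg : 0 ≤ g) :
    sumOverSubgroup H (conv (starFun g) g) = l21Norm H g ^ 2 := by
  rw [sumOverSubgroup_conv_starFun, l21Norm_eq_l2Norm_cosetSum, cosetSum_of_nonneg H hg]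
  exact sum_mul_self_eq_l2Norm_sq _

end Duality

section Spheres

variable {G : Type*} [Group G] (H : Subgroup G) (S : Set G)

noncomputable def spherePart {k : Type*} [Zero k] (f : G →₀ k) (n : ℕ) : G →₀ k :=
  f.filter fun x => wordLength S x = n

lemma spherePart_apply {k : Type*} [Zero k] (f : G →₀ k) (n : ℕ) (x : G) :
    spherePart S f n x = if wordLength S x = n then f x else 0 :=
  Finsupp.filter_apply _ _ _

lemma supportedInBall_spherePart {k : Type*} [Zero k] (f : G →₀ k) (n : ℕ) :
    supportedInBall S n (spherePart S f n) := fun x hx => by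
  rw [Finsupp.mem_support_iff, spherePart_apply] at hx
  exact (of_not_not fun h => hx (if_neg h)).le

lemma sum_spherePart {k : Type*} [AddCommMonoid k] (f : G →₀ k) {m : ℕ}
    (hm : ∀ x ∈ f.support, wordLength S x < m) :
    ∑ n ∈ Finset.range m, spherePart S f n = f := by
  ext x
  simp only [Finsupp.finsetSum_apply, spherePart_apply, Finset.sum_ite_eq, Finset.mem_range]
  by_cases hx : f x = 0
  · simp [hx]
  · exact if_pos (hm x (Finsupp.mem_support_iff.mpr hx))

lemma norm_weight_apply (s : ℝ) (f : G →₀ ℂ) (x : G) :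
    ‖weight S s f x‖ = (1 + (wordLength S x : ℝ)) ^ s * ‖f x‖ := by
  rw [weight, Finsupp.coe_mk, norm_mul, Complex.norm_real,
    Real.norm_of_nonneg (Real.rpow_nonneg (by positivity) s)]

lemma cosetSum_weight (f : G →₀ ℂ) (D : ℕ) {m : ℕ}
    (hm : ∀ x ∈ f.support, wordLength S x < m) :
    cosetSum H (weight S D f) =
      ∑ n ∈ Finset.range m, ((n : ℝ) + 1) ^ D • cosetSum H (spherePart S f n) := by
  simp only [cosetSum, ← Finsupp.mapDomain_smul, ← Finsupp.mapDomain_finsetSum]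
  congr 1
  ext x
  simp only [Finsupp.mapRange_apply, norm_weight_apply, Finsupp.finsetSum_apply, Finsupp.smul_apply,
    spherePart_apply, apply_ite norm, norm_zero, smul_eq_mul, mul_ite, mul_zero,
    Finset.sum_ite_eq, Finset.mem_range, Real.rpow_natCast]
  by_cases hx : f x = 0
  · simp [hx]
  · rw [if_pos (hm x (Finsupp.mem_support_iff.mpr hx)), add_comm]

lemma sum_sq_l21Norm_spherePart_le (f : G →₀ ℂ) (D : ℕ) {m : ℕ}
    (hm : ∀ x ∈ f.support, wordLength S x < m) :
    ∑ n ∈ Finset.range m, (((n : ℝ) + 1) ^ D * l21Norm H (spherePart S f n)) ^ 2 ≤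
      l21Norm H (weight S D f) ^ 2 := by
  rw [l21Norm_eq_l2Norm_cosetSum, cosetSum_weight H S f D hm]
  refine le_of_eq_of_le (Finset.sum_congr rfl fun n _ => ?_)
    (sum_l2Norm_sq_le_l2Norm_sum_sq _ _ fun n _ => smul_nonneg (by positivity)
      (cosetSum_nonneg H _))
  rw [l2Norm_smul, Real.norm_of_nonneg (by positivity)]
  rfl

lemma sum_range_inv_succ_sq_le_two (m : ℕ) :
    ∑ n ∈ Finset.range m, (((n : ℝ) + 1) ^ 2)⁻¹ ≤ 2 := by
  have h := sum_Ioo_inv_sq_le (α := ℝ) 0 (m + 1)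
  rw [show Finset.Ioo 0 (m + 1) = Finset.Ico (0 + 1) (m + 1) by ext; simp; omega,
    ← Finset.sum_Ico_add' (fun i : ℕ => ((i : ℝ) ^ 2)⁻¹), ← Finset.range_eq_Ico] at h
  simpa using h

lemma sum_le_sqrt_two_mul_sqrt_sum_sq (a : ℕ → ℝ) (m : ℕ) :
    ∑ n ∈ Finset.range m, a n ≤ √2 * √(∑ n ∈ Finset.range m, (((n : ℝ) + 1) * a n) ^ 2) := by
  calc ∑ n ∈ Finset.range m, a n = ∑ n ∈ Finset.range m, ((n : ℝ) + 1)⁻¹ * (((n : ℝ) + 1) * a n) :=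
        Finset.sum_congr rfl fun n _ => by field_simp
    _ ≤ √(∑ n ∈ Finset.range m, (((n : ℝ) + 1)⁻¹) ^ 2) *
          √(∑ n ∈ Finset.range m, (((n : ℝ) + 1) * a n) ^ 2) :=
        Real.sum_mul_le_sqrt_mul_sqrt _ _ _
    _ ≤ √2 * √(∑ n ∈ Finset.range m, (((n : ℝ) + 1) * a n) ^ 2) := by
        gcongr
        simpa [inv_pow] using sum_range_inv_succ_sq_le_two m

lemma hybridOpNorm_le_weight {C : ℝ} {D : ℕ} (hC : 0 ≤ C)
    (h : ∀ (R : ℕ) (f : G →₀ ℂ), supportedInBall S R f →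
      hybridOpNorm H f ≤ C * ((R : ℝ) + 1) ^ D * l21Norm H f) (f : G →₀ ℂ) :
    hybridOpNorm H f ≤ C * √2 * l21Norm H (weight S (D + 1 : ℕ) f) := by
  obtain ⟨m, hm⟩ : ∃ m, ∀ x ∈ f.support, wordLength S x < m :=
    ⟨f.support.sup (wordLength S) + 1, fun x hx => Nat.lt_succ_of_le (Finset.le_sup hx)⟩
  set a : ℕ → ℝ := fun n => ((n : ℝ) + 1) ^ D * l21Norm H (spherePart S f n)
  have hweight : √(∑ n ∈ Finset.range m, (((n : ℝ) + 1) * a n) ^ 2) ≤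
      l21Norm H (weight S (D + 1 : ℕ) f) := by
    rw [← Real.sqrt_sq (l21Norm_nonneg H _)]
    refine Real.sqrt_le_sqrt (le_of_eq_of_le (Finset.sum_congr rfl fun n _ => ?_)
      (sum_sq_l21Norm_spherePart_le H S f (D + 1) hm))
    simp only [a]
    ring
  calc hybridOpNorm H f = hybridOpNorm H (∑ n ∈ Finset.range m, spherePart S f n) := by
        rw [sum_spherePart S f hm]
    _ ≤ ∑ n ∈ Finset.range m, hybridOpNorm H (spherePart S f n) := hybridOpNorm_sum_le H _ _
    _ ≤ ∑ n ∈ Finset.range m, C * a n :=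
        Finset.sum_le_sum fun n _ => (h n _ (supportedInBall_spherePart S f n)).trans_eq
          (mul_assoc _ _ _)
    _ ≤ C * (√2 * √(∑ n ∈ Finset.range m, (((n : ℝ) + 1) * a n) ^ 2)) := by
        rw [← Finset.mul_sum]
        exact mul_le_mul_of_nonneg_left (sum_le_sqrt_two_mul_sqrt_sum_sq a m) hC
    _ ≤ C * √2 * l21Norm H (weight S (D + 1 : ℕ) f) := by
        rw [mul_assoc]
        gcongr

lemma l21Norm_weight_le {s : ℝ} (hs : 0 ≤ s) {R : ℕ} {f : G →₀ ℂ}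
    (hf : supportedInBall S R f) :
    l21Norm H (weight S s f) ≤ ((R : ℝ) + 1) ^ ⌈s⌉₊ * l21Norm H f := by
  have hR : (0 : ℝ) ≤ ((R : ℝ) + 1) ^ ⌈s⌉₊ := by positivity
  refine (l21Norm_mono H (g := ((R : ℝ) + 1) ^ ⌈s⌉₊ • f) fun x => ?_).trans_eq
    (by rw [l21Norm_smul, Real.norm_of_nonneg hR])
  rw [norm_weight_apply, Finsupp.smul_apply, norm_smul, Real.norm_of_nonneg hR]
  by_cases hx : f x = 0
  · simp [hx]
  gcongr
  have hlen : (wordLength S x : ℝ) ≤ R := by exact_mod_cast hf x (Finsupp.mem_support_iff.mpr hx)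
  calc (1 + (wordLength S x : ℝ)) ^ s ≤ ((R : ℝ) + 1) ^ s :=
        Real.rpow_le_rpow (by positivity) (by linarith) hs
    _ ≤ ((R : ℝ) + 1) ^ (⌈s⌉₊ : ℝ) :=
        Real.rpow_le_rpow_of_exponent_le (by linarith [R.cast_nonneg (α := ℝ)]) (Nat.le_ceil s)
    _ = ((R : ℝ) + 1) ^ ⌈s⌉₊ := Real.rpow_natCast _ _

end Spheres

section RealParts

variable {G : Type*} [Group G] (H : Subgroup G) (S : Set G)

lemma l21Norm_toC (f : G →₀ ℝ) : l21Norm H (toC f) = l21Norm H f := by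
  rw [l21Norm_eq_l2Norm_cosetSum, l21Norm_eq_l2Norm_cosetSum, cosetSum, cosetSum]
  congr 2
  ext x
  simp [toC]

lemma conv_toC (f ϕ : G →₀ ℝ) : conv (toC f) (toC ϕ) = toC (conv f ϕ) := by
  ext x
  rw [conv_apply, toC, Finsupp.sum_mapRange_index fun _ => zero_mul _]
  simp [toC, conv_apply, Finsupp.sum]

lemma supportedInBall_toC {R : ℕ} {f : G →₀ ℝ} (hf : supportedInBall S R f) :
    supportedInBall S R (toC f) :=
  fun x hx => hf x (Finsupp.support_mapRange hx)

lemma l21Norm_normFun {k : Type*} [NormedAddCommGroup k] (f : G →₀ k) :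
    l21Norm H (normFun f) = l21Norm H f :=
  (l21Norm_mono H fun x => by simp [normFun]).antisymm (l21Norm_mono H fun x => by simp [normFun])

lemma supportedInBall_normFun {k : Type*} [NormedAddCommGroup k] {R : ℕ} {f : G →₀ k}
    (hf : supportedInBall S R f) : supportedInBall S R (normFun f) :=
  fun x hx => hf x (Finsupp.support_mapRange hx)

end RealParts

section RapidDecay

variable {G : Type*} [Group G] (S : Set G) (H : Subgroup G)

def WeightedHybridBound : Prop :=
  ∃ K s : ℝ, 0 ≤ K ∧ 0 ≤ s ∧ ∀ f : G →₀ ℂ, hybridOpNorm H f ≤ K * l21Norm H (weight S s f)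

def HybridOpNormRD : Prop :=
  ∃ C : ℝ, ∃ D : ℕ, 0 ≤ C ∧ ∀ (R : ℕ) (f : G →₀ ℂ), supportedInBall S R f →
    hybridOpNorm H f ≤ C * ((R : ℝ) + 1) ^ D * l21Norm H f

def DualPairRD : Prop :=
  ∃ C : ℝ, ∃ D : ℕ, 0 ≤ C ∧ ∀ (R : ℕ) (f ϕ ψ : G →₀ ℝ),
    (∀ x, 0 ≤ f x) → (∀ x, 0 ≤ ϕ x) → (∀ x, 0 ≤ ψ x) → supportedInBall S R f →
    sumOverSubgroup H (conv (starFun (conv f ϕ)) (starFun ψ)) ≤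
      C * ((R : ℝ) + 1) ^ D * l21Norm H f * l21Norm H ϕ * l21Norm H (starFun ψ)

lemma weightedHybridBound_iff_hybridOpNormRD :
    WeightedHybridBound S H ↔ HybridOpNormRD S H := by
  constructor
  · rintro ⟨K, s, hK, hs, h⟩
    refine ⟨K, ⌈s⌉₊, hK, fun R f hf => ?_⟩
    calc hybridOpNorm H f ≤ K * l21Norm H (weight S s f) := h f
      _ ≤ K * (((R : ℝ) + 1) ^ ⌈s⌉₊ * l21Norm H f) := by
          gcongr
          exact l21Norm_weight_le H S hs hf
      _ = K * ((R : ℝ) + 1) ^ ⌈s⌉₊ * l21Norm H f := (mul_assoc _ _ _).symm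
  · rintro ⟨C, D, hC, h⟩
    exact ⟨C * √2, (D + 1 : ℕ), by positivity, by positivity, hybridOpNorm_le_weight H S hC h⟩

lemma pairRD_iff_hybridOpNormRD : PairRD S H ↔ HybridOpNormRD S H := by
  constructor
  · rintro ⟨C, D, hC, h⟩
    refine ⟨C, D, hC, fun R f hf => ?_⟩
    have hbound : 0 ≤ C * ((R : ℝ) + 1) ^ D * l21Norm H f :=
      mul_nonneg (by positivity) (l21Norm_nonneg H f)
    exact hybridOpNorm_le H hbound fun ϕ hϕ =>
      (h R f ϕ hf).trans (mul_le_of_le_one_right hbound hϕ)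
  · rintro ⟨C, D, hC, h⟩
    exact ⟨C, D, hC, fun R f ϕ hf => (l21Norm_conv_le_hybridOpNorm H f ϕ).trans
      (mul_le_mul_of_nonneg_right (h R f hf) (l21Norm_nonneg H ϕ))⟩

lemma pairRD_iff_dualPairRD : PairRD S H ↔ DualPairRD S H := by
  constructor
  · rintro ⟨C, D, hC, h⟩
    refine ⟨C, D, hC, fun R f ϕ ψ hf hϕ hψ hball => ?_⟩
    have hfϕ : l21Norm H (conv f ϕ) ≤ C * ((R : ℝ) + 1) ^ D * l21Norm H f * l21Norm H ϕ := by
      simpa only [conv_toC, l21Norm_toC] using h R (toC f) (toC ϕ) (supportedInBall_toC S hball)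
    exact (sumOverSubgroup_conv_starFun_le H (conv_nonneg hf hϕ) (starFun_nonneg hψ)).trans
      (mul_le_mul_of_nonneg_right hfϕ (l21Norm_nonneg H _))
  · rintro ⟨C, D, hC, h⟩
    refine ⟨C, D, hC, fun R f ϕ hf => ?_⟩
    set g := conv (normFun f) (normFun ϕ) with hgdef
    have hg : 0 ≤ g := conv_nonneg (normFun_nonneg f) (normFun_nonneg ϕ)
    have hsq : l21Norm H g ^ 2 ≤
        C * ((R : ℝ) + 1) ^ D * l21Norm H f * l21Norm H ϕ * l21Norm H g := by
      simpa only [← hgdef, starFun_starFun, sumOverSubgroup_conv_starFun_self H hg,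
        l21Norm_normFun] using
        h R (normFun f) (normFun ϕ) (starFun g) (normFun_nonneg f) (normFun_nonneg ϕ)
          (starFun_nonneg hg) (supportedInBall_normFun S hf)
    calc l21Norm H (conv f ϕ) ≤ l21Norm H g :=
          l21Norm_mono H fun x => (norm_conv_apply_le f ϕ x).trans (le_abs_self _)
      _ ≤ C * ((R : ℝ) + 1) ^ D * l21Norm H f * l21Norm H ϕ := by
          have hbound : 0 ≤ C * ((R : ℝ) + 1) ^ D * l21Norm H f * l21Norm H ϕ :=
            mul_nonneg (mul_nonneg (by positivity) (l21Norm_nonneg H f)) (l21Norm_nonneg H ϕ)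
          nlinarith [l21Norm_nonneg H g]

end RapidDecay

theorem statement0_general {G : Type*} [Group G] (S : Set G) (H : Subgroup G) :
    List.TFAE
      [ (∃ K s : ℝ, 0 ≤ K ∧ 0 ≤ s ∧ ∀ f : G →₀ ℂ,
          hybridOpNorm H f ≤ K * l21Norm H (weight S s f)),
        (∃ C : ℝ, ∃ D : ℕ, 0 ≤ C ∧ ∀ (R : ℕ) (f ϕ : G →₀ ℂ), supportedInBall S R f →
          l21Norm H (conv f ϕ) ≤ C * ((R : ℝ) + 1) ^ D * l21Norm H f * l21Norm H ϕ),
        (∃ C : ℝ, ∃ D : ℕ, 0 ≤ C ∧ ∀ (R : ℕ) (f : G →₀ ℂ), supportedInBall S R f →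
          hybridOpNorm H f ≤ C * ((R : ℝ) + 1) ^ D * l21Norm H f),
        (∃ C : ℝ, ∃ D : ℕ, 0 ≤ C ∧ ∀ (R : ℕ) (f ϕ ψ : G →₀ ℝ),
          (∀ x, 0 ≤ f x) → (∀ x, 0 ≤ ϕ x) → (∀ x, 0 ≤ ψ x) → supportedInBall S R f →
          sumOverSubgroup H (conv (starFun (conv f ϕ)) (starFun ψ)) ≤
            C * ((R : ℝ) + 1) ^ D * l21Norm H f * l21Norm H ϕ * l21Norm H (starFun ψ)) ] := by
  tfae_have 1 ↔ 3 := weightedHybridBound_iff_hybridOpNormRD S H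
  tfae_have 2 ↔ 3 := pairRD_iff_hybridOpNormRD S H
  tfae_have 2 ↔ 4 := pairRD_iff_dualPairRD S H
  tfae_finish

/-- equivalent characterizations of the rapid decay property for
the pair `(G, H)`. -/
theorem statement0 {G : Type*} [Group G] (S : Set G) (hfin : S.Finite)
    (hsym : ∀ s ∈ S, s⁻¹ ∈ S) (hgen : Subgroup.closure S = ⊤) (H : Subgroup G) :
    List.TFAE
      [ (∃ K s : ℝ, 0 ≤ K ∧ 0 ≤ s ∧ ∀ f : G →₀ ℂ,
          hybridOpNorm H f ≤ K * l21Norm H (weight S s f)),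
        (∃ C : ℝ, ∃ D : ℕ, 0 ≤ C ∧ ∀ (R : ℕ) (f ϕ : G →₀ ℂ), supportedInBall S R f →
          l21Norm H (conv f ϕ) ≤ C * ((R : ℝ) + 1) ^ D * l21Norm H f * l21Norm H ϕ),
        (∃ C : ℝ, ∃ D : ℕ, 0 ≤ C ∧ ∀ (R : ℕ) (f : G →₀ ℂ), supportedInBall S R f →
          hybridOpNorm H f ≤ C * ((R : ℝ) + 1) ^ D * l21Norm H f),
        (∃ C : ℝ, ∃ D : ℕ, 0 ≤ C ∧ ∀ (R : ℕ) (f ϕ ψ : G →₀ ℝ),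
          (∀ x, 0 ≤ f x) → (∀ x, 0 ≤ ϕ x) → (∀ x, 0 ≤ ψ x) → supportedInBall S R f →
          sumOverSubgroup H (conv (starFun (conv f ϕ)) (starFun ψ)) ≤
            C * ((R : ℝ) + 1) ^ D * l21Norm H f * l21Norm H ϕ * l21Norm H (starFun ψ)) ] :=
  statement0_general S H
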